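/- With the same setup as the distributional Bellman operator T on Δ([0,1/(1−γ)])^S, T is non-expansive in the supremum total variation metric: sup_{s∈S} TV([Tη](s), [Tη'](s)) ≤ sup_{s∈S} TV(η(s), η'(s)). -/

import Mathlib

/-!
A bound `TV(μ, ν) ≤ D` is the same as the two one-sided setwise bounds `μ B ≤ ν B + D` and
`ν B ≤ μ B + D`. Such a one-sided bound survives each ingredient of the Bellman operator: pushing
forward along `x ↦ r + γ x`, integrating the reward `r` against a (sub-)probability measure, and
mixing over actions and successor states with weights of total mass at most one. Applying this with
`D = sup_s TV(η s, η' s)` in both directions gives the claim.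
-/

open MeasureTheory Set
open scoped ENNReal

/-- The total variation distance between two measures on `ℝ`. -/
noncomputable def TV (μ ν : Measure ℝ) : ℝ :=
  ⨆ A : {A : Set ℝ // MeasurableSet A}, |(μ A).toReal - (ν A).toReal|

/-- The distributional Bellman operator:
`[Tη](s) = ∑_{a,s'} π(a|s) P(s'|s,a) ∫ (b_{r,γ})_# η(s') 𝒫_R(dr|s,a)`. -/
noncomputable def bellman {S A : Type*} [Fintype S] [Fintype A]
    (γ : ℝ) (pol : S → A → ℝ≥0∞) (P : S → A → S → ℝ≥0∞)
    (R : S → A → Measure ℝ) (η : S → Measure ℝ) : S → Measure ℝ :=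
  fun s => ∑ a : A, ∑ s' : S, (pol s a * P s a s') •
    ((R s a).bind (fun r => (η s').map (fun x => r + γ * x)))

lemma TV_comm (μ ν : Measure ℝ) : TV μ ν = TV ν μ := by
  simp only [TV, abs_sub_comm]

lemma TV_nonneg (μ ν : Measure ℝ) : 0 ≤ TV μ ν :=
  Real.iSup_nonneg fun _ => abs_nonneg _

lemma measure_le_add_TV (μ ν : Measure ℝ) [IsFiniteMeasure μ] [IsFiniteMeasure ν]
    {B : Set ℝ} (hB : MeasurableSet B) : μ B ≤ ν B + ENNReal.ofReal (TV μ ν) := by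
  have hbdd : BddAbove (range fun A : {A : Set ℝ // MeasurableSet A} =>
      |(μ A).toReal - (ν A).toReal|) := by
    refine ⟨μ.real univ + ν.real univ, ?_⟩
    rintro _ ⟨A, rfl⟩
    change |μ.real A - ν.real A| ≤ _
    have := measureReal_mono (μ := μ) (subset_univ (A : Set ℝ))
    have := measureReal_mono (μ := ν) (subset_univ (A : Set ℝ))
    rw [abs_sub_le_iff]
    constructor <;> linarith [measureReal_nonneg (μ := μ) (s := A),
      measureReal_nonneg (μ := ν) (s := A)]
  have hdiff : (μ B).toReal ≤ (ν B).toReal + TV μ ν := by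
    have : |(μ B).toReal - (ν B).toReal| ≤ TV μ ν := le_ciSup hbdd ⟨B, hB⟩
    linarith [le_abs_self ((μ B).toReal - (ν B).toReal)]
  rw [← ENNReal.ofReal_toReal (measure_ne_top μ B), ← ENNReal.ofReal_toReal (measure_ne_top ν B),
    ← ENNReal.ofReal_add ENNReal.toReal_nonneg (TV_nonneg μ ν)]
  exact ENNReal.ofReal_le_ofReal hdiff

lemma abs_toReal_sub_toReal_le {a b : ℝ≥0∞} {c : ℝ} (hc : 0 ≤ c)
    (hab : a ≤ b + ENNReal.ofReal c) (hba : b ≤ a + ENNReal.ofReal c) :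
    |a.toReal - b.toReal| ≤ c := by
  rcases eq_or_ne a ∞ with rfl | ha
  · have hb : b = ∞ := by simpa using hab
    simp [hb, hc]
  have hb : b ≠ ∞ := ne_top_of_le_ne_top (by simpa using ha) hba
  have h₁ := ENNReal.toReal_le_add hab hb ENNReal.ofReal_ne_top
  have h₂ := ENNReal.toReal_le_add hba ha ENNReal.ofReal_ne_top
  rw [ENNReal.toReal_ofReal hc] at h₁ h₂
  rw [abs_sub_le_iff]
  constructor <;> linarith

lemma TV_le_of_forall_le_add {μ ν : Measure ℝ} {c : ℝ} (hc : 0 ≤ c)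
    (hμν : ∀ B, MeasurableSet B → μ B ≤ ν B + ENNReal.ofReal c)
    (hνμ : ∀ B, MeasurableSet B → ν B ≤ μ B + ENNReal.ofReal c) : TV μ ν ≤ c :=
  Real.iSup_le (fun B => abs_toReal_sub_toReal_le hc (hμν B B.2) (hνμ B B.2)) hc

namespace MeasureTheory.Measure

variable {α β ι : Type*} [MeasurableSpace α] [MeasurableSpace β] {ε : ℝ≥0∞}

lemma map_apply_le_add {μ ν : Measure α} {f : α → β} (hf : Measurable f)
    (h : ∀ s, MeasurableSet s → μ s ≤ ν s + ε) {s : Set β} (hs : MeasurableSet s) :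
    μ.map f s ≤ ν.map f s + ε := by
  rw [map_apply hf hs, map_apply hf hs]
  exact h _ (hf hs)

lemma bind_apply_le_add {m : Measure α} (hm : m univ ≤ 1) {κ κ' : α → Measure β}
    (hκ : AEMeasurable κ m) (hκ' : AEMeasurable κ' m) {s : Set β} (hs : MeasurableSet s)
    (h : ∀ a, κ a s ≤ κ' a s + ε) : m.bind κ s ≤ m.bind κ' s + ε := by
  rw [bind_apply hs hκ, bind_apply hs hκ']
  calc ∫⁻ a, κ a s ∂m ≤ ∫⁻ a, (κ' a s + ε) ∂m := lintegral_mono h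
    _ = ∫⁻ a, κ' a s ∂m + m univ * ε := by
      rw [lintegral_add_right _ measurable_const, lintegral_const, mul_comm]
    _ ≤ ∫⁻ a, κ' a s ∂m + ε := by gcongr; exact mul_le_of_le_one_left' hm

lemma finsetSum_smul_apply_le_add (t : Finset ι) {w : ι → ℝ≥0∞}
    (hw : ∑ i ∈ t, w i ≤ 1) {μ ν : ι → Measure α} {s : Set α}
    (h : ∀ i ∈ t, μ i s ≤ ν i s + ε) :
    (∑ i ∈ t, w i • μ i) s ≤ (∑ i ∈ t, w i • ν i) s + ε := by
  simp only [finsetSum_apply, smul_apply, smul_eq_mul]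
  calc ∑ i ∈ t, w i * μ i s ≤ ∑ i ∈ t, w i * (ν i s + ε) := by
        gcongr with i hi; exact h i hi
    _ = ∑ i ∈ t, w i * ν i s + (∑ i ∈ t, w i) * ε := by
        rw [Finset.sum_mul, ← Finset.sum_add_distrib]; simp only [mul_add]
    _ ≤ ∑ i ∈ t, w i * ν i s + ε := by gcongr; exact mul_le_of_le_one_left' hw

lemma measurable_map_of_uncurry {γ : Type*} [MeasurableSpace γ] (ν : Measure β) [SFinite ν]
    {f : α → β → γ}
    (hf : Measurable (Function.uncurry f)) : Measurable fun a => ν.map (f a) := by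
  have : (fun a => ν.map (f a)) = fun a => (ν.map (Prod.mk a)).map (Function.uncurry f) :=
    funext fun a => (map_map hf measurable_prodMk_left).symm
  rw [this]
  exact (measurable_map _ hf).comp Measurable.map_prodMk_left

end MeasureTheory.Measure

lemma bellman_apply_le_add {S A : Type*} [Fintype S] [Fintype A] (γ : ℝ)
    {pol : S → A → ℝ≥0∞} (hpol : ∀ s, ∑ a : A, pol s a ≤ 1)
    {P : S → A → S → ℝ≥0∞} (hP : ∀ s a, ∑ s' : S, P s a s' ≤ 1)
    {R : S → A → Measure ℝ} (hR : ∀ s a, R s a univ ≤ 1)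
    {η η' : S → Measure ℝ} [∀ s, SFinite (η s)] [∀ s, SFinite (η' s)] {ε : ℝ≥0∞}
    (h : ∀ s B, MeasurableSet B → η s B ≤ η' s B + ε) (s : S) {B : Set ℝ} (hB : MeasurableSet B) :
    bellman γ pol P R η s B ≤ bellman γ pol P R η' s B + ε := by
  have hmeas (μ : Measure ℝ) [SFinite μ] : Measurable fun r : ℝ => μ.map (fun x => r + γ * x) :=
    Measure.measurable_map_of_uncurry μ (by fun_prop)
  have hw : ∑ x : A × S, pol s x.1 * P s x.1 x.2 ≤ 1 := by
    rw [Fintype.sum_prod_type' fun a s' => pol s a * P s a s']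
    calc ∑ a, ∑ s', pol s a * P s a s' = ∑ a, pol s a * ∑ s', P s a s' := by
          simp only [Finset.mul_sum]
      _ ≤ ∑ a, pol s a := by gcongr with a; exact mul_le_of_le_one_right' (hP s a)
      _ ≤ 1 := hpol s
  simp only [bellman, ← Fintype.sum_prod_type']
  refine Measure.finsetSum_smul_apply_le_add _ hw fun x _ => ?_
  refine Measure.bind_apply_le_add (hR s x.1) (hmeas _).aemeasurable (hmeas _).aemeasurable hB
    fun r => ?_
  exact Measure.map_apply_le_add (by fun_prop) (h x.2) hB

theorem bellman_nonexpansive_TV_general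
    {S A : Type*} [Fintype S] [Fintype A]
    (γ : ℝ)
    (pol : S → A → ℝ≥0∞) (hpol : ∀ s, ∑ a : A, pol s a = 1)
    (P : S → A → S → ℝ≥0∞) (hP : ∀ s a, ∑ s' : S, P s a s' = 1)
    (R : S → A → Measure ℝ) (hRprob : ∀ s a, IsProbabilityMeasure (R s a))
    (η η' : S → Measure ℝ)
    (hη : ∀ s, IsProbabilityMeasure (η s)) (hη' : ∀ s, IsProbabilityMeasure (η' s)) :
    (⨆ s : S, TV (bellman γ pol P R η s) (bellman γ pol P R η' s)) ≤
      ⨆ s : S, TV (η s) (η' s) := by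
  set D := ⨆ s : S, TV (η s) (η' s)
  have hD : 0 ≤ D := Real.iSup_nonneg fun s => TV_nonneg _ _
  have hTV : ∀ s, TV (η s) (η' s) ≤ D := le_ciSup (finite_range _).bddAbove
  have hpol' s : ∑ a, pol s a ≤ 1 := (hpol s).le
  have hP' s a : ∑ s', P s a s' ≤ 1 := (hP s a).le
  have hR s a : R s a univ ≤ 1 := (hRprob s a).measure_univ.le
  refine Real.iSup_le (fun s => TV_le_of_forall_le_add hD (fun B hB => ?_) (fun B hB => ?_)) hD
  · refine bellman_apply_le_add γ hpol' hP' hR (fun s' C hC => ?_) s hB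
    grw [measure_le_add_TV (η s') (η' s') hC, hTV s']
  · refine bellman_apply_le_add γ hpol' hP' hR (fun s' C hC => ?_) s hB
    grw [measure_le_add_TV (η' s') (η s') hC, TV_comm, hTV s']

/-- The distributional Bellman operator is non-expansive with
respect to the supremum total variation metric. -/
theorem bellman_nonexpansive_TV
    {S A : Type*} [Fintype S] [Fintype A] [Nonempty S] [Nonempty A]
    (γ : ℝ) (hγ : γ ∈ Set.Ioo (0 : ℝ) 1)
    (pol : S → A → ℝ≥0∞) (hpol : ∀ s, ∑ a : A, pol s a = 1)
    (P : S → A → S → ℝ≥0∞) (hP : ∀ s a, ∑ s' : S, P s a s' = 1)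
    (R : S → A → Measure ℝ) (hRprob : ∀ s a, IsProbabilityMeasure (R s a))
    (hRsupp : ∀ s a, R s a (Set.Icc (0 : ℝ) 1)ᶜ = 0)
    (η η' : S → Measure ℝ)
    (hη : ∀ s, IsProbabilityMeasure (η s)) (hη' : ∀ s, IsProbabilityMeasure (η' s))
    (hηsupp : ∀ s, η s (Set.Icc (0 : ℝ) (1 / (1 - γ)))ᶜ = 0)
    (hη'supp : ∀ s, η' s (Set.Icc (0 : ℝ) (1 / (1 - γ)))ᶜ = 0) :
    (⨆ s : S, TV (bellman γ pol P R η s) (bellman γ pol P R η' s)) ≤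
      ⨆ s : S, TV (η s) (η' s) :=
  bellman_nonexpansive_TV_general γ pol hpol P hP R hRprob η η' hη hη'
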